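/- Let (F_n) and (G_n) be sequences of real random variables with E[F_n²] = E[G_n²] = 1 and uniformly bounded fourth moments (sup_n E[F_n⁴ + G_n⁴] < ∞). If for all n, |E[φ(F_n)ψ(G_n)] − E[φ(F_n)]E[ψ(G_n)]| ≤ c‖ψ'‖_∞‖φ‖_{C^1} Cov(F_n², G_n²) for all smooth bounded test functions φ, ψ with bounded derivatives, and Cov(F_n², G_n²) → 0, then for every pair of bounded Lipschitz functions φ, ψ, E[φ(F_n)ψ(G_n)] − E[φ(F_n)]E[ψ(G_n)] → 0. -/

import Mathlib

open MeasureTheory Filter Topology Real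

/-- Analytic approximation of a bounded continuous function, uniformly on `[-R, R]`,
with global bound `B + η` and globally bounded derivative. -/
lemma analytic_approx_aux (φ : ℝ → ℝ) (B : ℝ) (hφ : Continuous φ) (hB : ∀ x, |φ x| ≤ B)
    {η R : ℝ} (hη : 0 < η) (hR : 0 < R) :
    ∃ f : ℝ → ℝ, ContDiff ℝ (⊤ : ℕ∞) f ∧ (∀ x, |f x| ≤ B + η) ∧
      (∃ D, ∀ x, |deriv f x| ≤ D) ∧ ∀ x, |x| ≤ R → |f x - φ x| ≤ η := by
  set a := Real.arctan R with ha_def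
  have ha2 : a < π/2 := Real.arctan_lt_pi_div_two R
  have ha0 : 0 < a := by
    rw [ha_def, ← Real.arctan_zero]
    exact Real.arctan_strictMono hR
  set cl : ℝ → ℝ := fun u => max (-a) (min a u) with hcl
  have hcl_cont : Continuous cl := continuous_const.max (continuous_const.min continuous_id)
  have hcl_mem : ∀ u, cl u ∈ Set.Ioo (-(π/2)) (π/2) := by
    intro u
    have h1 : -a ≤ cl u := le_max_left _ _
    have h2 : cl u ≤ a := max_le (by linarith) (min_le_left _ _)
    exact ⟨by linarith, by linarith⟩
  set H : ℝ → ℝ := fun u => φ (Real.tan (cl u)) with hH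
  have hH_cont : Continuous H := by
    apply hφ.comp
    apply continuous_iff_continuousAt.2
    intro u
    exact (Real.continuousAt_tan.2 (Real.cos_pos_of_mem_Ioo (hcl_mem u)).ne').comp
      hcl_cont.continuousAt
  have hHb : ∀ u, |H u| ≤ B := fun u => hB _
  obtain ⟨p, hp⟩ := exists_polynomial_near_of_continuousOn (-2) 2 H hH_cont.continuousOn η hη
  have hmem2 : ∀ x : ℝ, Real.arctan x ∈ Set.Icc (-2 : ℝ) 2 := by
    intro x
    have h1 := Real.arctan_lt_pi_div_two x
    have h2 := Real.neg_pi_div_two_lt_arctan x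
    have hπ : π/2 < 2 := by have := Real.pi_lt_d2; linarith
    exact ⟨by linarith, by linarith⟩
  refine ⟨fun x => p.eval (Real.arctan x), ?_, ?_, ?_, ?_⟩
  · have h1 : AnalyticOnNhd ℝ (fun y : ℝ => p.eval y) Set.univ :=
      AnalyticOnNhd.eval_polynomial p
    exact h1.contDiff.comp Real.contDiff_arctan
  · intro x
    have h := hp _ (hmem2 x)
    calc |p.eval (Real.arctan x)|
        = |(p.eval (Real.arctan x) - H (Real.arctan x)) + H (Real.arctan x)| := by ring_nf
      _ ≤ |p.eval (Real.arctan x) - H (Real.arctan x)| + |H (Real.arctan x)| := abs_add_le _ _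
      _ ≤ η + B := add_le_add h.le (hHb _)
      _ = B + η := by ring
  · obtain ⟨u₀, -, hu₀⟩ := isCompact_Icc.exists_isMaxOn (s := Set.Icc (-2:ℝ) 2)
      ⟨0, by norm_num⟩ ((p.derivative.continuous.abs).continuousOn)
    refine ⟨|p.derivative.eval u₀|, fun x => ?_⟩
    have hder : HasDerivAt (fun y : ℝ => p.eval (Real.arctan y))
        ((Polynomial.derivative p).eval (Real.arctan x) * (1/(1+x^2))) x := by
      have := (p.hasDerivAt (Real.arctan x)).comp x (Real.hasDerivAt_arctan x)
      simpa [Function.comp_def] using this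
    rw [hder.deriv, abs_mul]
    have b1 : |(Polynomial.derivative p).eval (Real.arctan x)| ≤ |p.derivative.eval u₀| :=
      hu₀ (hmem2 x)
    have b2 : |1/(1+x^2)| ≤ 1 := by
      rw [abs_of_nonneg (by positivity), div_le_one (by positivity)]
      nlinarith [sq_nonneg x]
    calc |(Polynomial.derivative p).eval (Real.arctan x)| * |1/(1+x^2)|
        ≤ |p.derivative.eval u₀| * 1 := mul_le_mul b1 b2 (abs_nonneg _) (abs_nonneg _)
      _ = |p.derivative.eval u₀| := mul_one _
  · intro x hx
    have hax : Real.arctan x ∈ Set.Icc (-a) a := by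
      rw [abs_le] at hx
      constructor
      · rw [ha_def, ← Real.arctan_neg]
        exact Real.arctan_strictMono.monotone hx.1
      · exact Real.arctan_strictMono.monotone hx.2
    have hclx : cl (Real.arctan x) = Real.arctan x := by
      rw [hcl]
      simp only
      rw [min_eq_right hax.2, max_eq_right hax.1]
    have hHx : H (Real.arctan x) = φ x := by
      rw [hH]
      simp only [hclx]
      rw [Real.tan_arctan]
    have h := hp _ (hmem2 x)
    rw [hHx] at h
    exact h.le

set_option maxHeartbeats 2000000

/-- If a quantitative factorization bound
`|E[φ(F_n)ψ(G_n)] − E[φ(F_n)]E[ψ(G_n)]| ≤ c ‖ψ'‖_∞ (‖φ‖_∞ + ‖φ'‖_∞) Cov(F_n², G_n²)`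
holds for all smooth bounded test functions with bounded derivatives, the variables have unit
second moments and uniformly bounded fourth moments, and `Cov(F_n², G_n²) → 0`, then for all
bounded Lipschitz `φ, ψ` one has `E[φ(F_n)ψ(G_n)] − E[φ(F_n)]E[ψ(G_n)] → 0`. -/
theorem stmt18 {Ω : Type*} [MeasureSpace Ω] (P : Measure Ω) [IsProbabilityMeasure P]
    (F G : ℕ → Ω → ℝ) (hF : ∀ n, Measurable (F n)) (hG : ∀ n, Measurable (G n))
    (hF2 : ∀ n, ∫ ω, F n ω ^ 2 ∂P = 1) (hG2 : ∀ n, ∫ ω, G n ω ^ 2 ∂P = 1)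
    (hF4 : ∀ n, Integrable (fun ω => F n ω ^ 4) P)
    (hG4 : ∀ n, Integrable (fun ω => G n ω ^ 4) P)
    (C4 : ℝ)
    (hC4 : ∀ n, (∫ ω, F n ω ^ 4 ∂P) + (∫ ω, G n ω ^ 4 ∂P) ≤ C4)
    (c : ℝ) (hc : 0 < c)
    (hquant : ∀ n, ∀ φ ψ : ℝ → ℝ, ∀ Mφ Mφ' Mψ Mψ' : ℝ,
      ContDiff ℝ (⊤ : ℕ∞) φ → ContDiff ℝ (⊤ : ℕ∞) ψ →
      (∀ x, |φ x| ≤ Mφ) → (∀ x, |deriv φ x| ≤ Mφ') →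
      (∀ x, |ψ x| ≤ Mψ) → (∀ x, |deriv ψ x| ≤ Mψ') →
      |(∫ ω, φ (F n ω) * ψ (G n ω) ∂P)
          - (∫ ω, φ (F n ω) ∂P) * (∫ ω, ψ (G n ω) ∂P)|
        ≤ c * Mψ' * (Mφ + Mφ') *
            ((∫ ω, F n ω ^ 2 * G n ω ^ 2 ∂P)
              - (∫ ω, F n ω ^ 2 ∂P) * (∫ ω, G n ω ^ 2 ∂P)))
    (hcov : Tendsto (fun n =>
        (∫ ω, F n ω ^ 2 * G n ω ^ 2 ∂P)
          - (∫ ω, F n ω ^ 2 ∂P) * (∫ ω, G n ω ^ 2 ∂P)) atTop (𝓝 0)) :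
    ∀ (φ ψ : ℝ → ℝ) (Kφ Kψ : NNReal) (Bφ Bψ : ℝ),
      LipschitzWith Kφ φ → LipschitzWith Kψ ψ →
      (∀ x, |φ x| ≤ Bφ) → (∀ x, |ψ x| ≤ Bψ) →
      Tendsto (fun n =>
          (∫ ω, φ (F n ω) * ψ (G n ω) ∂P)
            - (∫ ω, φ (F n ω) ∂P) * (∫ ω, ψ (G n ω) ∂P)) atTop (𝓝 0) := by
  intro φ ψ Kφ Kψ Bφ Bψ hLφ hLψ hBφ hBψ
  have hφc : Continuous φ := hLφ.continuous
  have hψc : Continuous ψ := hLψ.continuous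
  have hBφ0 : 0 ≤ Bφ := (abs_nonneg _).trans (hBφ 0)
  have hBψ0 : 0 ≤ Bψ := (abs_nonneg _).trans (hBψ 0)
  rw [Metric.tendsto_nhds]
  intro ε hε
  -- choose the accuracy η and the truncation level R
  set η : ℝ := min 1 (ε / (8 * (Bφ + Bψ + 2))) with hηdef
  have hη_pos : 0 < η := lt_min one_pos (by positivity)
  have hη1 : η ≤ 1 := min_le_left _ _
  have hηQ : 2 * η * (Bφ + Bψ + 1) ≤ ε / 4 := by
    have h1 : η ≤ ε / (8 * (Bφ + Bψ + 2)) := min_le_right _ _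
    have h2 : ε / (8 * (Bφ + Bψ + 2)) * (8 * (Bφ + Bψ + 2)) = ε :=
      div_mul_cancel₀ _ (by positivity)
    have h3 : 0 ≤ ε / (8 * (Bφ + Bψ + 2)) := by positivity
    nlinarith [mul_le_mul_of_nonneg_left h1 (show (0:ℝ) ≤ 2 * (Bφ + Bψ + 1) by linarith)]
  set R : ℝ := Real.sqrt ((2*Bφ + 2*Bψ + 2) / η) with hRdef
  have hRsq : R^2 = (2*Bφ + 2*Bψ + 2)/η := Real.sq_sqrt (by positivity)
  have hR : 0 < R := Real.sqrt_pos.mpr (by positivity)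
  set aφ : ℝ := (2*Bφ + 1)/R^2 with haφdef
  set aψ : ℝ := (2*Bψ + 1)/R^2 with haψdef
  have haφ0 : 0 ≤ aφ := by positivity
  have haψ0 : 0 ≤ aψ := by positivity
  have haφ : aφ ≤ η := by
    rw [haφdef, hRsq, div_div_eq_mul_div, div_le_iff₀ (by positivity)]
    nlinarith [hη_pos.le, hBψ0]
  have haψ : aψ ≤ η := by
    rw [haψdef, hRsq, div_div_eq_mul_div, div_le_iff₀ (by positivity)]
    nlinarith [hη_pos.le, hBφ0]
  -- analytic approximations
  obtain ⟨f, hfC, hfB', ⟨Df, hDf⟩, hfapp⟩ := analytic_approx_aux φ Bφ hφc hBφ hη_pos hR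
  obtain ⟨g, hgC, hgB', ⟨Dg, hDg⟩, hgapp⟩ := analytic_approx_aux ψ Bψ hψc hBψ hη_pos hR
  have hfB : ∀ x, |f x| ≤ Bφ + 1 := fun x => (hfB' x).trans (by linarith)
  have hgB : ∀ x, |g x| ≤ Bψ + 1 := fun x => (hgB' x).trans (by linarith)
  have hfcont : Continuous f := hfC.continuous
  have hgcont : Continuous g := hgC.continuous
  -- pointwise comparison including the tail
  have hfp : ∀ x, |f x - φ x| ≤ η + aφ * x^2 := by
    intro x
    rcases le_or_gt |x| R with h | h
    · have h0 : 0 ≤ aφ * x^2 := by positivity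
      linarith [hfapp x h]
    · have hx2 : R^2 ≤ x^2 := by nlinarith [abs_nonneg x, sq_abs x]
      have hRx : aφ * R^2 ≤ aφ * x^2 := by gcongr
      have hval : aφ * R^2 = 2*Bφ + 1 := div_mul_cancel₀ _ (by positivity)
      calc |f x - φ x| ≤ |f x| + |φ x| := abs_sub _ _
        _ ≤ (Bφ + η) + Bφ := add_le_add (hfB' x) (hBφ x)
        _ ≤ 2*Bφ + 1 := by linarith
        _ = aφ * R^2 := hval.symm
        _ ≤ aφ * x^2 := hRx
        _ ≤ η + aφ * x^2 := by linarith
  have hgp : ∀ x, |g x - ψ x| ≤ η + aψ * x^2 := by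
    intro x
    rcases le_or_gt |x| R with h | h
    · have h0 : 0 ≤ aψ * x^2 := by positivity
      linarith [hgapp x h]
    · have hx2 : R^2 ≤ x^2 := by nlinarith [abs_nonneg x, sq_abs x]
      have hRx : aψ * R^2 ≤ aψ * x^2 := by gcongr
      have hval : aψ * R^2 = 2*Bψ + 1 := div_mul_cancel₀ _ (by positivity)
      calc |g x - ψ x| ≤ |g x| + |ψ x| := abs_sub _ _
        _ ≤ (Bψ + η) + Bψ := add_le_add (hgB' x) (hBψ x)
        _ ≤ 2*Bψ + 1 := by linarith
        _ = aψ * R^2 := hval.symm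
        _ ≤ aψ * x^2 := hRx
        _ ≤ η + aψ * x^2 := by linarith
  -- eventual smallness of the quantitative bound
  set A : ℝ := c * Dg * ((Bφ + 1) + Df) with hAdef
  have hAcov : ∀ᶠ n in atTop, A * ((∫ ω, F n ω ^ 2 * G n ω ^ 2 ∂P)
      - (∫ ω, F n ω ^ 2 ∂P) * (∫ ω, G n ω ^ 2 ∂P)) < ε/4 := by
    have h := hcov.const_mul A
    rw [mul_zero] at h
    exact h.eventually_lt_const (by positivity)
  filter_upwards [hAcov] with n hn
  rw [Real.dist_0_eq_abs]
  -- integrability facts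
  have IF2 : Integrable (fun ω => F n ω ^ 2) P := by
    refine Integrable.mono' ((integrable_const 1).add (hF4 n))
      (((hF n).pow_const 2).aestronglyMeasurable) (ae_of_all _ fun ω => ?_)
    simp only [Pi.add_apply]
    rw [Real.norm_eq_abs, abs_of_nonneg (sq_nonneg _)]
    nlinarith [sq_nonneg (F n ω ^ 2 - 1)]
  have IG2 : Integrable (fun ω => G n ω ^ 2) P := by
    refine Integrable.mono' ((integrable_const 1).add (hG4 n))
      (((hG n).pow_const 2).aestronglyMeasurable) (ae_of_all _ fun ω => ?_)
    simp only [Pi.add_apply]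
    rw [Real.norm_eq_abs, abs_of_nonneg (sq_nonneg _)]
    nlinarith [sq_nonneg (G n ω ^ 2 - 1)]
  have Ibdd : ∀ (h : ℝ → ℝ) (Bh : ℝ), Continuous h → (∀ x, |h x| ≤ Bh) →
      ∀ (X : Ω → ℝ), Measurable X → Integrable (fun ω => h (X ω)) P := by
    intro h Bh hcont hb X hX
    exact Integrable.mono' (integrable_const Bh)
      ((hcont.measurable.comp hX).aestronglyMeasurable)
      (ae_of_all _ fun ω => by simpa [Real.norm_eq_abs] using hb (X ω))
  have IφF := Ibdd φ Bφ hφc hBφ (F n) (hF n)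
  have IfF := Ibdd f (Bφ + 1) hfcont hfB (F n) (hF n)
  have IψG := Ibdd ψ Bψ hψc hBψ (G n) (hG n)
  have IgG := Ibdd g (Bψ + 1) hgcont hgB (G n) (hG n)
  have Iφψ : Integrable (fun ω => φ (F n ω) * ψ (G n ω)) P := by
    refine Integrable.mono' (integrable_const (Bφ * Bψ))
      (((hφc.measurable.comp (hF n)).mul (hψc.measurable.comp (hG n))).aestronglyMeasurable)
      (ae_of_all _ fun ω => ?_)
    rw [Real.norm_eq_abs, abs_mul]
    exact mul_le_mul (hBφ _) (hBψ _) (abs_nonneg _) hBφ0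
  have Ifg : Integrable (fun ω => f (F n ω) * g (G n ω)) P := by
    refine Integrable.mono' (integrable_const ((Bφ + 1) * (Bψ + 1)))
      (((hfcont.measurable.comp (hF n)).mul (hgcont.measurable.comp (hG n))).aestronglyMeasurable)
      (ae_of_all _ fun ω => ?_)
    rw [Real.norm_eq_abs, abs_mul]
    exact mul_le_mul (hfB _) (hgB _) (abs_nonneg _) (by linarith)
  -- basic integral computations
  have eF : ∫ ω, (η + aφ * F n ω ^ 2) ∂P = η + aφ := by
    rw [integral_add (integrable_const η) (IF2.const_mul aφ), integral_const,
      integral_const_mul, hF2 n]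
    simp
  have eG : ∫ ω, (η + aψ * G n ω ^ 2) ∂P = η + aψ := by
    rw [integral_add (integrable_const η) (IG2.const_mul aψ), integral_const,
      integral_const_mul, hG2 n]
    simp
  have IbF : Integrable (fun ω => η + aφ * F n ω ^ 2) P :=
    (integrable_const η).add (IF2.const_mul aφ)
  have IbG : Integrable (fun ω => η + aψ * G n ω ^ 2) P :=
    (integrable_const η).add (IG2.const_mul aψ)
  -- step 1: product expectations are close
  have h1 : |(∫ ω, φ (F n ω) * ψ (G n ω) ∂P) - ∫ ω, f (F n ω) * g (G n ω) ∂P|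
      ≤ Bψ * (η + aφ) + (Bφ + 1) * (η + aψ) := by
    rw [← integral_sub Iφψ Ifg, ← Real.norm_eq_abs]
    have hbint : Integrable
        (fun ω => Bψ * (η + aφ * F n ω ^ 2) + (Bφ + 1) * (η + aψ * G n ω ^ 2)) P :=
      (IbF.const_mul Bψ).add (IbG.const_mul (Bφ + 1))
    calc ‖∫ ω, (φ (F n ω) * ψ (G n ω) - f (F n ω) * g (G n ω)) ∂P‖
        ≤ ∫ ω, (Bψ * (η + aφ * F n ω ^ 2) + (Bφ + 1) * (η + aψ * G n ω ^ 2)) ∂P := by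
          refine norm_integral_le_of_norm_le hbint (ae_of_all _ fun ω => ?_)
          have hid : φ (F n ω) * ψ (G n ω) - f (F n ω) * g (G n ω)
              = (φ (F n ω) - f (F n ω)) * ψ (G n ω)
                + f (F n ω) * (ψ (G n ω) - g (G n ω)) := by ring
          rw [Real.norm_eq_abs, hid]
          calc |(φ (F n ω) - f (F n ω)) * ψ (G n ω)
                + f (F n ω) * (ψ (G n ω) - g (G n ω))|
              ≤ |φ (F n ω) - f (F n ω)| * |ψ (G n ω)|
                + |f (F n ω)| * |ψ (G n ω) - g (G n ω)| := by
                refine (abs_add_le _ _).trans ?_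
                rw [abs_mul, abs_mul]
            _ ≤ (η + aφ * F n ω ^ 2) * Bψ + (Bφ + 1) * (η + aψ * G n ω ^ 2) := by
                refine add_le_add (mul_le_mul ?_ (hBψ _) (abs_nonneg _) (by positivity))
                  (mul_le_mul (hfB _) ?_ (abs_nonneg _) (by linarith))
                · rw [abs_sub_comm]; exact hfp _
                · rw [abs_sub_comm]; exact hgp _
            _ = Bψ * (η + aφ * F n ω ^ 2) + (Bφ + 1) * (η + aψ * G n ω ^ 2) := by ring
      _ = Bψ * (η + aφ) + (Bφ + 1) * (η + aψ) := by
          rw [integral_add (IbF.const_mul Bψ) (IbG.const_mul (Bφ + 1)),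
            integral_const_mul, integral_const_mul, eF, eG]
  -- step 2: single expectations are close
  have h2a : |(∫ ω, φ (F n ω) ∂P) - ∫ ω, f (F n ω) ∂P| ≤ η + aφ := by
    rw [← integral_sub IφF IfF, ← Real.norm_eq_abs, ← eF]
    refine norm_integral_le_of_norm_le IbF (ae_of_all _ fun ω => ?_)
    rw [Real.norm_eq_abs, abs_sub_comm]
    exact hfp _
  have h2b : |(∫ ω, ψ (G n ω) ∂P) - ∫ ω, g (G n ω) ∂P| ≤ η + aψ := by
    rw [← integral_sub IψG IgG, ← Real.norm_eq_abs, ← eG]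
    refine norm_integral_le_of_norm_le IbG (ae_of_all _ fun ω => ?_)
    rw [Real.norm_eq_abs, abs_sub_comm]
    exact hgp _
  have hEψ : |∫ ω, ψ (G n ω) ∂P| ≤ Bψ := by
    rw [← Real.norm_eq_abs]
    calc ‖∫ ω, ψ (G n ω) ∂P‖ ≤ ∫ _ω, Bψ ∂P :=
          norm_integral_le_of_norm_le (integrable_const Bψ)
            (ae_of_all _ fun ω => by simpa [Real.norm_eq_abs] using hBψ (G n ω))
      _ = Bψ := by simp
  have hEf : |∫ ω, f (F n ω) ∂P| ≤ Bφ + 1 := by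
    rw [← Real.norm_eq_abs]
    calc ‖∫ ω, f (F n ω) ∂P‖ ≤ ∫ _ω, (Bφ + 1) ∂P :=
          norm_integral_le_of_norm_le (integrable_const (Bφ + 1))
            (ae_of_all _ fun ω => by simpa [Real.norm_eq_abs] using hfB (F n ω))
      _ = Bφ + 1 := by simp
  have h2 : |(∫ ω, φ (F n ω) ∂P) * (∫ ω, ψ (G n ω) ∂P)
      - (∫ ω, f (F n ω) ∂P) * (∫ ω, g (G n ω) ∂P)|
      ≤ (η + aφ) * Bψ + (Bφ + 1) * (η + aψ) := by
    set p1 := ∫ ω, φ (F n ω) ∂P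
    set p2 := ∫ ω, ψ (G n ω) ∂P
    set q1 := ∫ ω, f (F n ω) ∂P
    set q2 := ∫ ω, g (G n ω) ∂P
    have hid : p1 * p2 - q1 * q2 = (p1 - q1) * p2 + q1 * (p2 - q2) := by ring
    rw [hid]
    calc |(p1 - q1) * p2 + q1 * (p2 - q2)|
        ≤ |p1 - q1| * |p2| + |q1| * |p2 - q2| := by
          refine (abs_add_le _ _).trans ?_
          rw [abs_mul, abs_mul]
      _ ≤ (η + aφ) * Bψ + (Bφ + 1) * (η + aψ) :=
          add_le_add (mul_le_mul h2a hEψ (abs_nonneg _) (by positivity))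
            (mul_le_mul hEf h2b (abs_nonneg _) (by linarith))
  -- step 3: the quantitative bound for the analytic approximations
  have hq := hquant n f g (Bφ + 1) Df (Bψ + 1) Dg hfC hgC hfB hDf hgB hDg
  -- combine
  have hsum1 : Bψ * (η + aφ) + (Bφ + 1) * (η + aψ) ≤ ε / 4 := by
    have t1 : Bψ * (η + aφ) ≤ Bψ * (2 * η) :=
      mul_le_mul_of_nonneg_left (by linarith) hBψ0
    have t2 : (Bφ + 1) * (η + aψ) ≤ (Bφ + 1) * (2 * η) :=
      mul_le_mul_of_nonneg_left (by linarith) (by linarith)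
    nlinarith [hηQ]
  have hsum2 : (η + aφ) * Bψ + (Bφ + 1) * (η + aψ) ≤ ε / 4 := by
    have t1 : (η + aφ) * Bψ ≤ (2 * η) * Bψ :=
      mul_le_mul_of_nonneg_right (by linarith) hBψ0
    have t2 : (Bφ + 1) * (η + aψ) ≤ (Bφ + 1) * (2 * η) :=
      mul_le_mul_of_nonneg_left (by linarith) (by linarith)
    nlinarith [hηQ]
  have hqlt : |(∫ ω, f (F n ω) * g (G n ω) ∂P)
      - (∫ ω, f (F n ω) ∂P) * (∫ ω, g (G n ω) ∂P)| < ε / 4 := by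
    exact lt_of_le_of_lt hq hn
  calc |(∫ ω, φ (F n ω) * ψ (G n ω) ∂P)
        - (∫ ω, φ (F n ω) ∂P) * (∫ ω, ψ (G n ω) ∂P)|
      = |((∫ ω, f (F n ω) * g (G n ω) ∂P)
            - (∫ ω, f (F n ω) ∂P) * (∫ ω, g (G n ω) ∂P))
          + (((∫ ω, φ (F n ω) * ψ (G n ω) ∂P) - ∫ ω, f (F n ω) * g (G n ω) ∂P)
          - ((∫ ω, φ (F n ω) ∂P) * (∫ ω, ψ (G n ω) ∂P)
            - (∫ ω, f (F n ω) ∂P) * (∫ ω, g (G n ω) ∂P)))| := by ring_nf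
    _ ≤ |(∫ ω, f (F n ω) * g (G n ω) ∂P)
            - (∫ ω, f (F n ω) ∂P) * (∫ ω, g (G n ω) ∂P)|
        + |((∫ ω, φ (F n ω) * ψ (G n ω) ∂P) - ∫ ω, f (F n ω) * g (G n ω) ∂P)
          - ((∫ ω, φ (F n ω) ∂P) * (∫ ω, ψ (G n ω) ∂P)
            - (∫ ω, f (F n ω) ∂P) * (∫ ω, g (G n ω) ∂P))| := abs_add_le _ _
    _ ≤ |(∫ ω, f (F n ω) * g (G n ω) ∂P)
            - (∫ ω, f (F n ω) ∂P) * (∫ ω, g (G n ω) ∂P)|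
        + (|(∫ ω, φ (F n ω) * ψ (G n ω) ∂P) - ∫ ω, f (F n ω) * g (G n ω) ∂P|
          + |(∫ ω, φ (F n ω) ∂P) * (∫ ω, ψ (G n ω) ∂P)
            - (∫ ω, f (F n ω) ∂P) * (∫ ω, g (G n ω) ∂P)|) :=
        add_le_add le_rfl (abs_sub _ _)
    _ < ε/4 + (ε/4 + ε/4) := by
        refine add_lt_add_of_lt_of_le hqlt (add_le_add (h1.trans hsum1) (h2.trans hsum2))
    _ < ε := by linarith
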